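/- For any two distinct angles θ_0 ≠ θ_0' in [0, 2π), there is a unique function p in R_1 (trigonometric polynomials of degree at most 2 taking values in [0,1]) with p(θ_0) = p(θ_0') = 0 and max_θ p(θ) = 1, and it has the form p(θ) = c(1 - cos(θ - θ_0))(1 - cos(θ - θ_0')) for a uniquely determined constant c > 0. -/

import Mathlib

open Real

/-- `p` is a real trigonometric polynomial of degree at most 2. -/
def IsTrigPoly2 (p : ℝ → ℝ) : Prop :=
  ∃ c0 c1 s1 c2 s2 : ℝ, ∀ θ : ℝ,
    p θ = c0 + c1 * Real.cos θ + s1 * Real.sin θ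
      + c2 * Real.cos (2 * θ) + s2 * Real.sin (2 * θ)

/-!
Writing `z = e^{iθ}`, the function `z² p(θ)` is a complex polynomial `Q(z)` of degree at most 4.
A nonnegative `p` has a critical point at each of its zeros, so `Q` has double roots at
`e^{iθ₀} ≠ e^{iθ₀'}`; by degree count `Q` is a constant multiple of `(z - e^{iθ₀})²(z - e^{iθ₀'})²`,
which says that `p` is a real multiple of `(1 - cos(θ - θ₀))(1 - cos(θ - θ₀'))`. Normalising the
maximum to 1 forces the multiple to be the reciprocal of the maximum of this product.
-/

open Polynomial
open Complex (I)
open scoped Complex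

theorem Function.Periodic.exists_forall_le_of_continuous {α : Type*} [TopologicalSpace α]
    [LinearOrder α] [ClosedIciTopology α] {f : ℝ → α} {c : ℝ} (hf : Function.Periodic f c)
    (hc : c ≠ 0) (hcont : Continuous f) : ∃ x, ∀ y, f y ≤ f x := by
  obtain ⟨_, ⟨x, rfl⟩, hx⟩ :=
    (hf.compact_of_continuous hc hcont).exists_isGreatest (Set.range_nonempty f)
  exact ⟨x, fun y => hx ⟨y, rfl⟩⟩

theorem eq_inv_of_mul_le_one_of_mul_eq_one {a u v : ℝ} (hv : 0 ≤ v) (hvu : v ≤ u)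
    (hu : a * u ≤ 1) (hav : a * v = 1) : a = u⁻¹ := by
  have ha : 0 < a := pos_of_mul_pos_left (hav ▸ one_pos) hv
  exact eq_inv_of_mul_eq_one_left (le_antisymm hu (hav ▸ mul_le_mul_of_nonneg_left hvu ha.le))

noncomputable def oneSubCosProd (θ₀ θ₀' θ : ℝ) : ℝ :=
  (1 - Real.cos (θ - θ₀)) * (1 - Real.cos (θ - θ₀'))

section oneSubCosProd

variable (θ₀ θ₀' : ℝ)

theorem oneSubCosProd_nonneg (θ : ℝ) : 0 ≤ oneSubCosProd θ₀ θ₀' θ :=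
  mul_nonneg (sub_nonneg.2 (Real.cos_le_one _)) (sub_nonneg.2 (Real.cos_le_one _))

theorem continuous_oneSubCosProd : Continuous (oneSubCosProd θ₀ θ₀') := by
  unfold oneSubCosProd; fun_prop

theorem periodic_oneSubCosProd : Function.Periodic (oneSubCosProd θ₀ θ₀') (2 * π) := by
  intro θ
  simp only [oneSubCosProd, add_sub_right_comm θ, Real.cos_add_two_pi]

theorem exists_oneSubCosProd_pos : ∃ θ, 0 < oneSubCosProd θ₀ θ₀' θ := by
  by_contra! h
  have h₁ := le_antisymm (h (θ₀ + π)) (oneSubCosProd_nonneg θ₀ θ₀' _)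
  have h₂ := le_antisymm (h (θ₀ + π / 2)) (oneSubCosProd_nonneg θ₀ θ₀' _)
  simp only [oneSubCosProd, add_sub_right_comm θ₀, Real.cos_add_pi, Real.cos_add_pi_div_two,
    sub_self, Real.cos_zero, Real.sin_zero] at h₁ h₂
  nlinarith [Real.sin_sq_add_cos_sq (θ₀ - θ₀')]

theorem exists_forall_oneSubCosProd_le :
    ∃ θm, 0 < oneSubCosProd θ₀ θ₀' θm ∧ ∀ θ, oneSubCosProd θ₀ θ₀' θ ≤ oneSubCosProd θ₀ θ₀' θm := by
  obtain ⟨θm, hθm⟩ := (periodic_oneSubCosProd θ₀ θ₀').exists_forall_le_of_continuous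
    Real.two_pi_pos.ne' (continuous_oneSubCosProd θ₀ θ₀')
  obtain ⟨θ, hθ⟩ := exists_oneSubCosProd_pos θ₀ θ₀'
  exact ⟨θm, hθ.trans_le (hθm θ), hθm⟩

end oneSubCosProd

theorem sq_exp_mul_I_sub_exp_mul_I (θ θ₀ : ℝ) :
    (cexp (θ * I) - cexp (θ₀ * I)) ^ 2 =
      -2 * cexp (θ * I) * cexp (θ₀ * I) * (1 - Real.cos (θ - θ₀) : ℝ) := by
  have hz : cexp (θ * I) ≠ 0 := Complex.exp_ne_zero _
  have hz₀ : cexp (θ₀ * I) ≠ 0 := Complex.exp_ne_zero _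
  push_cast
  rw [Complex.cos, show ((θ : ℂ) - θ₀) * I = θ * I - θ₀ * I by ring,
    show -((θ : ℂ) - θ₀) * I = θ₀ * I - θ * I by ring, Complex.exp_sub, Complex.exp_sub]
  field_simp
  ring

theorem IsTrigPoly2.differentiable {p : ℝ → ℝ} (hp : IsTrigPoly2 p) : Differentiable ℝ p := by
  obtain ⟨c0, c1, s1, c2, s2, hp⟩ := hp
  rw [funext hp]
  fun_prop

theorem IsTrigPoly2.exists_polynomial {p : ℝ → ℝ} (hp : IsTrigPoly2 p) :
    ∃ Q : ℂ[X], Q.natDegree ≤ 4 ∧ ∀ θ : ℝ, Q.eval (cexp (θ * I)) = cexp (θ * I) ^ 2 * p θ := by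
  obtain ⟨c0, c1, s1, c2, s2, hp⟩ := hp
  refine ⟨C ((c2 + s2 * I) / 2) + C ((c1 + s1 * I) / 2) * X + C (c0 : ℂ) * X ^ 2
    + C ((c1 - s1 * I) / 2) * X ^ 3 + C ((c2 - s2 * I) / 2) * X ^ 4, by compute_degree, fun θ => ?_⟩
  have hz : cexp (θ * I) ≠ 0 := Complex.exp_ne_zero _
  simp only [eval_add, eval_mul, eval_C, eval_X, eval_pow, hp θ, Real.cos_two_mul,
    Real.sin_two_mul]
  push_cast
  rw [Complex.cos, Complex.sin, neg_mul, Complex.exp_neg]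
  field_simp
  ring_nf

theorem X_sub_C_sq_dvd_of_eval_exp_mul_I_eq {Q : ℂ[X]} {p : ℝ → ℝ} {n : ℕ} {θ₀ : ℝ}
    (hQ : ∀ θ : ℝ, Q.eval (cexp (θ * I)) = cexp (θ * I) ^ n * p θ)
    (h0 : p θ₀ = 0) (hd : HasDerivAt p 0 θ₀) : (X - C (cexp (θ₀ * I))) ^ 2 ∣ Q := by
  rcases eq_or_ne Q 0 with rfl | hQ0
  · exact dvd_zero _
  have hroot : Q.IsRoot (cexp (θ₀ * I)) := by simp [IsRoot, hQ, h0]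
  have hexp : HasDerivAt (fun w : ℂ => cexp (w * I)) (cexp (θ₀ * I) * I) θ₀ := by
    simpa using ((hasDerivAt_id (θ₀ : ℂ)).mul_const I).cexp
  have hlhs : HasDerivAt (fun θ : ℝ => Q.eval (cexp (θ * I)))
      ((derivative Q).eval (cexp (θ₀ * I)) * (cexp (θ₀ * I) * I)) θ₀ :=
    ((Q.hasDerivAt _).comp _ hexp).comp_ofReal
  have hrhs : HasDerivAt (fun θ : ℝ => cexp (θ * I) ^ n * p θ) 0 θ₀ := by
    have hpow : DifferentiableAt ℝ (fun θ : ℝ => cexp (θ * I) ^ n) θ₀ := by fun_prop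
    simpa [h0] using hpow.hasDerivAt.fun_mul hd.ofReal_comp
  have hder : (derivative Q).IsRoot (cexp (θ₀ * I)) := by
    have := hlhs.unique (by simpa only [hQ] using hrhs)
    simpa [IsRoot, Complex.exp_ne_zero, Complex.I_ne_zero] using this
  exact (le_rootMultiplicity_iff hQ0).1 ((one_lt_rootMultiplicity_iff_isRoot hQ0).2 ⟨hroot, hder⟩)

theorem IsTrigPoly2.exists_eq_mul_oneSubCosProd {p : ℝ → ℝ} {θ₀ θ₀' : ℝ} (hp : IsTrigPoly2 p)
    (hnn : ∀ θ, 0 ≤ p θ) (hne : cexp (θ₀ * I) ≠ cexp (θ₀' * I)) (h0 : p θ₀ = 0)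
    (h0' : p θ₀' = 0) : ∃ μ : ℝ, ∀ θ, p θ = μ * oneSubCosProd θ₀ θ₀' θ := by
  obtain ⟨Q, hdeg, hQ⟩ := hp.exists_polynomial
  set z₀ := cexp (θ₀ * I)
  set z₀' := cexp (θ₀' * I)
  have hcrit : ∀ {θ}, p θ = 0 → HasDerivAt p 0 θ := fun {θ} hθ => by
    have hmin : IsLocalMin p θ := Filter.Eventually.of_forall fun y => hθ ▸ hnn y
    simpa only [hmin.deriv_eq_zero] using (hp.differentiable θ).hasDerivAt
  have hdvd : ((X - C z₀) * (X - C z₀')) ^ 2 ∣ Q := by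
    rw [mul_pow]
    exact (isCoprime_X_sub_C_of_isUnit_sub (sub_ne_zero.2 hne).isUnit).pow.mul_dvd
      (X_sub_C_sq_dvd_of_eval_exp_mul_I_eq hQ h0 (hcrit h0))
      (X_sub_C_sq_dvd_of_eval_exp_mul_I_eq hQ h0' (hcrit h0'))
  have hmonic : (((X - C z₀) * (X - C z₀')) ^ 2).Monic :=
    ((monic_X_sub_C z₀).mul (monic_X_sub_C z₀')).pow 2
  have hQeq := eq_leadingCoeff_mul_of_monic_of_dvd_of_natDegree_le hmonic hdvd
    (by simpa [natDegree_pow, natDegree_mul, X_sub_C_ne_zero] using hdeg)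
  -- `(z - z₀)² (z - z₀')² = 4 z² z₀ z₀' · oneSubCosProd θ₀ θ₀' θ` for `z = e^{iθ}`
  set κ := 4 * Q.leadingCoeff * z₀ * z₀'
  have hκ : ∀ θ : ℝ, (p θ : ℂ) = κ * oneSubCosProd θ₀ θ₀' θ := fun θ => by
    have h := hQ θ
    rw [hQeq, eval_mul, eval_C, eval_pow, eval_mul, eval_sub, eval_sub, eval_X, eval_C, eval_C,
      mul_pow, sq_exp_mul_I_sub_exp_mul_I, sq_exp_mul_I_sub_exp_mul_I] at h
    apply mul_left_cancel₀ (pow_ne_zero 2 (Complex.exp_ne_zero (θ * I)))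
    rw [← h, oneSubCosProd]
    push_cast
    ring
  -- `p` and `oneSubCosProd` are real, so only `re κ` matters
  exact ⟨κ.re, fun θ => by simpa using congrArg Complex.re (hκ θ)⟩

theorem injOn_exp_mul_I_Ico : Set.InjOn (fun θ : ℝ => cexp (θ * I)) (Set.Ico 0 (2 * π)) :=
  fun _ hx _ hy h => Circle.exp_injOn_Ico (by simp) hx hy (Circle.ext h)

theorem stmt5 (θ₀ θ₀' : ℝ) (h₀ : θ₀ ∈ Set.Ico (0 : ℝ) (2 * Real.pi))
    (h₀' : θ₀' ∈ Set.Ico (0 : ℝ) (2 * Real.pi)) (hne : θ₀ ≠ θ₀') :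
    ∃ c : ℝ, 0 < c ∧
      (∀ θ : ℝ, c * (1 - Real.cos (θ - θ₀)) * (1 - Real.cos (θ - θ₀')) ∈ Set.Icc (0 : ℝ) 1) ∧
      (∃ θ₁ : ℝ, c * (1 - Real.cos (θ₁ - θ₀)) * (1 - Real.cos (θ₁ - θ₀')) = 1) ∧
      (∀ p : ℝ → ℝ, IsTrigPoly2 p → (∀ θ : ℝ, p θ ∈ Set.Icc (0 : ℝ) 1) →
        p θ₀ = 0 → p θ₀' = 0 → (∃ θ₁ : ℝ, p θ₁ = 1) →
        ∀ θ : ℝ, p θ = c * (1 - Real.cos (θ - θ₀)) * (1 - Real.cos (θ - θ₀'))) ∧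
      (∀ c' : ℝ, 0 < c' →
        (∃ θ₁ : ℝ, c' * (1 - Real.cos (θ₁ - θ₀)) * (1 - Real.cos (θ₁ - θ₀')) = 1) →
        (∀ θ : ℝ, c' * (1 - Real.cos (θ - θ₀)) * (1 - Real.cos (θ - θ₀')) ≤ 1) →
        c' = c) := by
  simp only [mul_assoc, ← oneSubCosProd.eq_1]
  obtain ⟨θm, hpos, hmax⟩ := exists_forall_oneSubCosProd_le θ₀ θ₀'
  have hunique : ∀ c : ℝ, (∀ θ, c * oneSubCosProd θ₀ θ₀' θ ≤ 1) →
      (∃ θ₁, c * oneSubCosProd θ₀ θ₀' θ₁ = 1) → c = (oneSubCosProd θ₀ θ₀' θm)⁻¹ :=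
    fun c hle ⟨θ₁, h1⟩ => eq_inv_of_mul_le_one_of_mul_eq_one
      (oneSubCosProd_nonneg θ₀ θ₀' θ₁) (hmax θ₁) (hle θm) h1
  refine ⟨_, inv_pos.2 hpos, fun θ => ⟨?_, ?_⟩, ⟨θm, inv_mul_cancel₀ hpos.ne'⟩, ?_,
    fun c _ h1 hle => hunique c hle h1⟩
  · exact mul_nonneg (inv_pos.2 hpos).le (oneSubCosProd_nonneg θ₀ θ₀' θ)
  · exact (inv_mul_le_one₀ hpos).2 (hmax θ)
  · rintro p hp hp01 h0 h0' ⟨θ₁, h1⟩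
    obtain ⟨μ, hμ⟩ := hp.exists_eq_mul_oneSubCosProd (fun θ => (hp01 θ).1)
      (injOn_exp_mul_I_Ico.ne h₀ h₀' hne) h0 h0'
    rw [← hunique μ (fun θ => hμ θ ▸ (hp01 θ).2) ⟨θ₁, hμ θ₁ ▸ h1⟩]
    exact hμ
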